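/- arXiv:2106.13941 — 2 statements merged into one kernel-verified Lean document; each statement's English description precedes it below -/
import Mathlib

section
/- Let k ≥ 3 be an integer and Q₂(r) = −(k+1)²r⁴ + 2(k+1)(3k+1)r² − 4(k+1)(2k−1)r + 3(k−1)². Then Q₂ has exactly two real roots, i.e., the set {r ∈ ℝ : Q₂(r) = 0} has exactly two elements. -/
open Real MeasureTheory Set intervalIntegral Filter

noncomputable def Q₁ (k : ℕ) (r : ℝ) : ℝ :=
  -((k : ℝ) + 1) ^ 2 * r ^ 4 + 2 * ((k : ℝ) + 1) * (2 * (k : ℝ) + 1) * r ^ 3 -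
    2 * ((k : ℝ) + 1) * (3 * (k : ℝ) + 1) * r ^ 2 + 2 * (2 * (k : ℝ) - 1) * ((k : ℝ) + 1) * r -
    ((k : ℝ) - 1) ^ 2

noncomputable def Q₂ (k : ℕ) (r : ℝ) : ℝ :=
  -((k : ℝ) + 1) ^ 2 * r ^ 4 + 2 * ((k : ℝ) + 1) * (3 * (k : ℝ) + 1) * r ^ 2 -
    4 * ((k : ℝ) + 1) * (2 * (k : ℝ) - 1) * r + 3 * ((k : ℝ) - 1) ^ 2

lemma Q2_continuous (k : ℕ) : Continuous (Q₂ k) := by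
  unfold Q₂; fun_prop

lemma Q2_hasDerivAt (k : ℕ) (x : ℝ) :
    HasDerivAt (Q₂ k)
      (-4 * ((k : ℝ) + 1) ^ 2 * x ^ 3 + 4 * ((k : ℝ) + 1) * (3 * (k : ℝ) + 1) * x -
        4 * ((k : ℝ) + 1) * (2 * (k : ℝ) - 1)) x := by
  have hfun : Q₂ k = fun r : ℝ =>
      (-((k : ℝ) + 1) ^ 2) * r ^ 4 + (2 * ((k : ℝ) + 1) * (3 * (k : ℝ) + 1)) * r ^ 2 -
        (4 * ((k : ℝ) + 1) * (2 * (k : ℝ) - 1)) * r + 3 * ((k : ℝ) - 1) ^ 2 := by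
    funext r; unfold Q₂; ring
  rw [hfun]
  have h0 := ((((hasDerivAt_pow 4 x).const_mul (-((k : ℝ) + 1) ^ 2)).add
      ((hasDerivAt_pow 2 x).const_mul (2 * ((k : ℝ) + 1) * (3 * (k : ℝ) + 1)))).sub
      ((hasDerivAt_id x).const_mul (4 * ((k : ℝ) + 1) * (2 * (k : ℝ) - 1)))).add_const
      (3 * ((k : ℝ) - 1) ^ 2)
  refine h0.congr_deriv ?_
  push_cast
  ring

set_option maxHeartbeats 2000000 in
/-- for `k ≥ 3`, `Q₂` has exactly two real roots. -/
theorem Q2_exactly_two_roots (k : ℕ) (hk : 3 ≤ k) :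
    {r : ℝ | Q₂ k r = 0}.encard = 2 := by
  have hK : (3 : ℝ) ≤ (k : ℝ) := by exact_mod_cast hk
  set K : ℝ := (k : ℝ) with hKdef
  have hKpos : (0 : ℝ) < K + 1 := by linarith
  -- the cut point r₀ = 1 - s₀ with s₀ = √(2/(K+1))
  set s₀ : ℝ := Real.sqrt (2 / (K + 1)) with hs₀def
  have hs₀pos : 0 < s₀ := Real.sqrt_pos.mpr (by positivity)
  have hs₀sq : (K + 1) * s₀ ^ 2 = 2 := by
    rw [hs₀def, sq_sqrt (by positivity)]
    field_simp
  have hs₀lt1 : s₀ < 1 := by nlinarith [hs₀pos, hs₀sq]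
  have hcube : (K + 1) * s₀ ^ 3 = 2 * s₀ := by linear_combination s₀ * hs₀sq
  have hquart : (K + 1) ^ 2 * s₀ ^ 4 = 4 := by
    linear_combination ((K + 1) * s₀ ^ 2 + 2) * hs₀sq
  have hu2 : 2 ≤ (K + 1) * s₀ := by
    by_contra h
    push_neg at h
    have h1 : 0 < (K + 1) * s₀ := by positivity
    nlinarith [hs₀sq, mul_pos h1 h1]
  set r₀ : ℝ := 1 - s₀ with hr₀def
  have hr₀pos : 0 < r₀ := by rw [hr₀def]; linarith
  have hcont := Q2_continuous k
  -- strict monotone on Iic (-2)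
  have hmono : StrictMonoOn (Q₂ k) (Iic (-2)) := by
    apply strictMonoOn_of_deriv_pos (convex_Iic _) hcont.continuousOn
    intro x hx
    rw [interior_Iic, mem_Iio] at hx
    rw [(Q2_hasDerivAt k x).deriv]
    have hcub : (K + 1) * x ^ 3 - (3 * K + 1) * x + (2 * K - 1) ≤ -7 := by
      nlinarith [mul_nonneg (by linarith : (0:ℝ) ≤ -x) (by nlinarith : (0:ℝ) ≤ x ^ 2 - 4)]
    nlinarith [mul_nonneg (by linarith : (0:ℝ) ≤ K + 1)
      (by linarith : (0:ℝ) ≤ -7 - ((K + 1) * x ^ 3 - (3 * K + 1) * x + (2 * K - 1)))]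
  -- positive on [-2, 0]
  have hposmid : ∀ r : ℝ, -2 ≤ r → r ≤ 0 → 0 < Q₂ k r := by
    intro r h1 h2
    unfold Q₂
    rw [← hKdef]
    nlinarith [mul_nonneg (sq_nonneg (K + 1)) (mul_nonneg (sq_nonneg r) (by nlinarith : (0:ℝ) ≤ 4 - r ^ 2)),
      mul_nonneg (by nlinarith : (0:ℝ) ≤ 4 * (K + 1) * (2 * K - 1)) (by linarith : (0:ℝ) ≤ -r),
      sq_nonneg r]
  -- strict anti on Icc 0 r₀
  have hanti : StrictAntiOn (Q₂ k) (Icc 0 r₀) := by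
    apply strictAntiOn_of_deriv_neg (convex_Icc _ _) hcont.continuousOn
    intro x hx
    rw [interior_Icc, mem_Ioo] at hx
    obtain ⟨hx0, hxr⟩ := hx
    rw [(Q2_hasDerivAt k x).deriv]
    have hbr : (K + 1) * (x ^ 2 + x * (1 - s₀) + (1 - s₀) ^ 2) ≤ 3 * K + 1 := by
      have p1 : (0:ℝ) ≤ (K + 1) * (((1 - s₀) - x) * ((1 - s₀) + x)) := by
        apply mul_nonneg (by linarith)
        apply mul_nonneg <;> [skip; skip] <;>
          · rw [hr₀def] at hxr; linarith
      have p2 : (0:ℝ) ≤ (K + 1) * (((1 - s₀) - x) * (1 - s₀)) := by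
        apply mul_nonneg (by linarith)
        apply mul_nonneg <;> · rw [hr₀def] at hxr; linarith
      nlinarith [p1, p2, hs₀sq, hu2]
    have hCx : 0 < (K + 1) * x ^ 3 - (3 * K + 1) * x + (2 * K - 1) := by
      have p3 : (0:ℝ) ≤ ((1 - s₀) - x) *
          ((3 * K + 1) - (K + 1) * (x ^ 2 + x * (1 - s₀) + (1 - s₀) ^ 2)) := by
        apply mul_nonneg (by rw [hr₀def] at hxr; linarith) (by linarith)
      nlinarith [p3, hs₀sq, hcube, hs₀lt1]
    nlinarith [mul_pos hKpos hCx]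
  -- negative on [r₀, ∞)
  have hneg : ∀ r : ℝ, r₀ ≤ r → Q₂ k r < 0 := by
    intro r hr
    rcases le_or_gt r 1 with h1 | h1
    · -- r ∈ [r₀, 1], write s = 1 - r ∈ [0, s₀]
      have hs1 : 1 - r ≤ s₀ := by rw [hr₀def] at hr; linarith
      have hs0 : 0 ≤ 1 - r := by linarith
      have hs2 : (K + 1) * (1 - r) ^ 2 ≤ 2 := by
        nlinarith [hs₀sq, mul_nonneg (by linarith : (0:ℝ) ≤ K + 1)
          (mul_nonneg (by linarith : (0:ℝ) ≤ s₀ - (1 - r)) (by linarith : (0:ℝ) ≤ s₀ + (1 - r)))]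
      rcases eq_or_lt_of_le hs0 with h | h
      · -- r = 1
        have : r = 1 := by linarith
        subst this
        unfold Q₂; rw [← hKdef]; nlinarith
      · unfold Q₂; rw [← hKdef]
        nlinarith [mul_nonneg (by linarith : (0:ℝ) ≤ 2 - (K + 1) * (1 - r) ^ 2)
            (mul_nonneg (by linarith : (0:ℝ) ≤ K + 1) (le_of_lt h)),
          mul_nonneg (by linarith : (0:ℝ) ≤ K + 1) (sq_nonneg (2 * (1 - r) - 1)),
          mul_pos (by positivity : (0:ℝ) < (K + 1) ^ 2) (pow_pos h 4)]
    · -- r > 1, t = r - 1 > 0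
      unfold Q₂; rw [← hKdef]
      nlinarith [mul_nonneg (by linarith : (0:ℝ) ≤ K + 1) (sq_nonneg (2 * (r - 1) - 1)),
        mul_pos (by positivity : (0:ℝ) < (K + 1) ^ 2) (pow_pos (by linarith : (0:ℝ) < r - 1) 3),
        mul_nonneg (sq_nonneg (K + 1)) (pow_nonneg (by linarith : (0:ℝ) ≤ r - 1) 4)]
  -- values for IVT
  have hQm3 : Q₂ k (-3) < 0 := by unfold Q₂; rw [← hKdef]; nlinarith
  have hQm2 : 0 < Q₂ k (-2) := hposmid (-2) le_rfl (by norm_num)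
  have hQ0 : 0 < Q₂ k 0 := hposmid 0 (by norm_num) le_rfl
  have hQr₀ : Q₂ k r₀ < 0 := hneg r₀ le_rfl
  -- first root
  obtain ⟨x₁, hx₁mem, hx₁⟩ :=
    intermediate_value_Icc (by norm_num : (-3:ℝ) ≤ -2) hcont.continuousOn
      (⟨hQm3.le, hQm2.le⟩ : (0:ℝ) ∈ Icc (Q₂ k (-3)) (Q₂ k (-2)))
  -- second root
  obtain ⟨x₂, hx₂mem, hx₂⟩ :=
    intermediate_value_Icc' hr₀pos.le hcont.continuousOn
      (⟨hQr₀.le, hQ0.le⟩ : (0:ℝ) ∈ Icc (Q₂ k r₀) (Q₂ k 0))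
  have hx₁le : x₁ ≤ -2 := hx₁mem.2
  have hx₂0 : 0 ≤ x₂ := hx₂mem.1
  have hx₂r : x₂ ≤ r₀ := hx₂mem.2
  have hne : x₁ ≠ x₂ := by intro h; rw [h] at hx₁le; linarith
  have hset : {r : ℝ | Q₂ k r = 0} = {x₁, x₂} := by
    ext r
    simp only [mem_setOf_eq, mem_insert_iff, mem_singleton_iff]
    constructor
    · intro hr
      rcases le_or_gt r (-2) with h | h
      · left
        exact hmono.injOn (mem_Iic.mpr h) (mem_Iic.mpr hx₁le) (by rw [hr, hx₁])
      rcases le_or_gt r 0 with h0 | h0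
      · exact absurd hr (ne_of_gt (hposmid r h.le h0))
      rcases le_or_gt r r₀ with h2 | h2
      · right
        exact hanti.injOn ⟨h0.le, h2⟩ ⟨hx₂0, hx₂r⟩ (by rw [hr, hx₂])
      · exact absurd hr (ne_of_lt (hneg r h2.le))
    · rintro (rfl | rfl)
      · exact hx₁
      · exact hx₂
  rw [hset, Set.encard_pair hne]
end

section
/- Let k ≥ 3 be an integer, Q₂(r) = −(k+1)²r⁴ + 2(k+1)(3k+1)r² − 4(k+1)(2k−1)r + 3(k−1)², and r₀⁻ = ( k(k+2) − √(k(k+2)(2k+1)) ) / ((k+1)(k+2)). Then Q₂(0) = 3(k−1)² > 0, Q₂(k/(k+1)) = 4 − 4k − 1/(k+1)² < 0, Q₂(r₀⁻) < 0, and Q₂(r) < 0 for every r in the closed interval [r₀⁻, k/(k+1)]. -/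
open Real MeasureTheory Set intervalIntegral Filter

noncomputable def r0minus (k : ℕ) : ℝ :=
  ((k : ℝ) * ((k : ℝ) + 2) - Real.sqrt ((k : ℝ) * ((k : ℝ) + 2) * (2 * (k : ℝ) + 1))) /
    (((k : ℝ) + 1) * ((k : ℝ) + 2))

set_option maxHeartbeats 1600000 in
/-- values and signs of `Q₂`, and `Q₂ < 0` on `[r₀⁻, k/(k+1)]` for `k ≥ 3`. -/
theorem Q2_neg_on_interval (k : ℕ) (hk : 3 ≤ k) :
    Q₂ k 0 = 3 * ((k : ℝ) - 1) ^ 2 ∧ 0 < Q₂ k 0 ∧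
    Q₂ k ((k : ℝ) / ((k : ℝ) + 1)) = 4 - 4 * (k : ℝ) - 1 / ((k : ℝ) + 1) ^ 2 ∧
    Q₂ k ((k : ℝ) / ((k : ℝ) + 1)) < 0 ∧
    Q₂ k (r0minus k) < 0 ∧
    ∀ r ∈ Set.Icc (r0minus k) ((k : ℝ) / ((k : ℝ) + 1)), Q₂ k r < 0 := by
  have hK : (3:ℝ) ≤ (k:ℝ) := by exact_mod_cast hk
  set K : ℝ := (k:ℝ) with hKdef
  have hK1 : (0:ℝ) < K + 1 := by linarith
  set s : ℝ := Real.sqrt (K * (K + 2) * (2 * K + 1)) with hsdef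
  have hs0 : 0 ≤ s := Real.sqrt_nonneg _
  have hs2 : s ^ 2 = K * (K + 2) * (2 * K + 1) := by
    rw [hsdef, Real.sq_sqrt]; positivity
  have hspos : 0 < s := by
    rw [hsdef]; apply Real.sqrt_pos.2; positivity
  have hne : ((K + 1) * (K + 2)) ≠ 0 := by positivity
  set a : ℝ := r0minus k with hadef
  set b : ℝ := K / (K + 1) with hbdef
  have hDa : a * ((K + 1) * (K + 2)) = K * (K + 2) - s := by
    rw [hadef, r0minus, div_mul_cancel₀ _ hne]
  have hslt : s < K * (K + 2) := by
    have h1 : (0:ℝ) < K * (K + 2) := by positivity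
    have h2 : 2 * K + 1 < K * (K + 2) := by nlinarith
    rw [hsdef]
    exact (Real.sqrt_lt' (by positivity)).2 (by nlinarith [mul_lt_mul_of_pos_left h2 h1])
  have ha0 : 0 < a := by nlinarith [hDa, hslt]
  have hbK : b * (K + 1) = K := by
    rw [hbdef, div_mul_cancel₀ _ (ne_of_gt hK1)]
  have hab : a < b := by nlinarith [hDa, hspos, hbK]
  have hb1 : b < 1 := by nlinarith [hbK]
  have ha1 : a < 1 := lt_trans hab hb1
  -- quadratic relation for a
  have hqa : (K + 1) * (K + 2) * a ^ 2 - 2 * K * (K + 2) * a + K * (K - 1) = 0 := by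
    have hs_eq : s = K * (K + 2) - a * ((K + 1) * (K + 2)) := by linarith
    have h2 : (K * (K + 2) - a * ((K + 1) * (K + 2))) ^ 2 = K * (K + 2) * (2 * K + 1) := by
      rw [← hs_eq]; exact hs2
    have hK2 : ((K + 1) * (K + 2)) > 0 := by positivity
    nlinarith [h2]
  -- easy values
  have hv0 : Q₂ k 0 = 3 * (K - 1) ^ 2 := by rw [Q₂]; ring
  have hp0 : 0 < Q₂ k 0 := by rw [hv0]; nlinarith
  have hvb : Q₂ k b = 4 - 4 * K - 1 / (K + 1) ^ 2 := by
    rw [Q₂, hbdef]; field_simp; ring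
  have hQb : Q₂ k b < 0 := by
    rw [hvb]
    have : 0 < 1 / (K + 1) ^ 2 := by positivity
    linarith
  -- Q₂ at a
  have key : ((K + 1) * (K + 2)) ^ 2 * Q₂ k a =
      (-4*K^5 - 4*K^4 + 28*K^3 + 60*K^2 + 48*K + 16) * a +
      (-8*K^4 - 16*K^3 - 4*K^2 + 16*K + 12) := by
    rw [Q₂]
    linear_combination ((-K^4 - 5*K^3 - 9*K^2 - 7*K - 2) * a ^ 2 +
      (-2*K^4 - 8*K^3 - 10*K^2 - 4*K) * a +
      (3*K^4 + 15*K^3 + 29*K^2 + 21*K + 4)) * hqa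
  have hQa : Q₂ k a < 0 := by
    have hsum : (-4*K^5 - 4*K^4 + 28*K^3 + 60*K^2 + 48*K + 16) +
        (-8*K^4 - 16*K^3 - 4*K^2 + 16*K + 12) < 0 := by nlinarith
    have hbe : (-8*K^4 - 16*K^3 - 4*K^2 + 16*K + 12) < 0 := by nlinarith
    have h1 : a * ((-4*K^5 - 4*K^4 + 28*K^3 + 60*K^2 + 48*K + 16) +
        (-8*K^4 - 16*K^3 - 4*K^2 + 16*K + 12)) < 0 :=
      mul_neg_of_pos_of_neg ha0 hsum
    have h2 : (1 - a) * (-8*K^4 - 16*K^3 - 4*K^2 + 16*K + 12) ≤ 0 :=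
      mul_nonpos_of_nonneg_of_nonpos (by linarith) (le_of_lt hbe)
    have h3 : ((K + 1) * (K + 2)) ^ 2 * Q₂ k a < 0 := by
      rw [key]; nlinarith [h1, h2]
    nlinarith [h3, sq_nonneg ((K+1)*(K+2))]
  refine ⟨hv0, hp0, hvb, hQb, hQa, ?_⟩
  rintro r ⟨har, hrb⟩
  -- chord inequality (convexity on the interval)
  have hra0 : 0 < r := lt_of_lt_of_le ha0 har
  have hrb1 : r < 1 := lt_of_le_of_lt hrb hb1
  have hfac : (b - r) * Q₂ k a + (r - a) * Q₂ k b - (b - a) * Q₂ k r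
      = (r - a) * (b - r) * (b - a) *
        (-(K + 1)^2 * (a^2 + b^2 + r^2 + a*b + a*r + b*r) + 2 * (K + 1) * (3*K + 1)) := by
    simp only [Q₂]
    ring
  have hb0 : 0 < b := lt_trans ha0 hab
  have hbb2 : (K + 1)^2 * b^2 = K^2 := by nlinarith [hbK]
  have hsym : a^2 + b^2 + r^2 + a*b + a*r + b*r ≤ 6 * b^2 := by
    nlinarith [mul_le_mul hab.le hrb hra0.le hb0.le, mul_le_mul hab.le hab.le ha0.le hb0.le,
      mul_le_mul hrb hrb hra0.le hb0.le, mul_le_mul hab.le (le_refl b) hb0.le hb0.le,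
      mul_le_mul hrb (le_refl b) hb0.le hb0.le]
  have hbr : -(K + 1)^2 * (a^2 + b^2 + r^2 + a*b + a*r + b*r) + 2 * (K + 1) * (3*K + 1) ≥ 0 := by
    nlinarith [mul_le_mul_of_nonneg_left hsym (sq_nonneg (K + 1)), hbb2]
  have hchord : (b - a) * Q₂ k r ≤ (b - r) * Q₂ k a + (r - a) * Q₂ k b := by
    nlinarith [hfac, mul_nonneg (mul_nonneg (mul_nonneg (sub_nonneg.2 har) (sub_nonneg.2 hrb))
      (le_of_lt (sub_pos.2 hab))) hbr]
  have hrhs : (b - r) * Q₂ k a + (r - a) * Q₂ k b < 0 := by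
    rcases lt_or_eq_of_le hrb with h | h
    · have := mul_neg_of_pos_of_neg (sub_pos.2 h) hQa
      have := mul_nonpos_of_nonneg_of_nonpos (sub_nonneg.2 har) (le_of_lt hQb)
      linarith
    · rw [h]
      have h2 : (b - b) * Q₂ k a = 0 := by ring
      linarith [mul_neg_of_pos_of_neg (sub_pos.2 hab) hQb, h2]
  by_contra hcon
  push_neg at hcon
  have : 0 ≤ (b - a) * Q₂ k r := mul_nonneg (le_of_lt (sub_pos.2 hab)) hcon
  linarith
end
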